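/- arXiv:2007.10188 — 7 statements merged into one kernel-verified Lean document; each statement's English description precedes it below -/
import Mathlib

section
/- Let μ > 0, λ : ℝ → ℝ continuous with Λℓ ≤ λ ≤ Λu, and for S₀ ≥ 0 let S(t; S₀) = S₀ e^{-μ t} + ∫_{-t}^{0} λ(s) e^{μ s} ds (the pullback solution at time 0 started at time -t). Then S(t; S₀) → S* := ∫_{-∞}^{0} λ(s) e^{μ s} ds as t → ∞, uniformly for S₀ in any bounded subset of [0,∞). -/
/-!
Since `S(t; S₀) - S* = S₀ e^{-μ t} - ∫_{-∞}^{-t} λ(s) e^{μ s} ds`, the first term tends to zero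
uniformly for `S₀` in a bounded set, and the second is the tail of an integral that converges
because the bounded `λ` makes the integrand dominated by a multiple of `e^{μ s}`.
-/

open Real Filter MeasureTheory Topology

theorem Filter.Tendsto.tendstoUniformlyOn_mul_of_isBounded {ι R : Type*}
    [NonUnitalSeminormedRing R] {f : ι → R} {l : Filter ι} (hf : Tendsto f l (𝓝 0))
    {K : Set R} (hK : Bornology.IsBounded K) :
    TendstoUniformlyOn (fun t x => x * f t) 0 l K := by
  obtain ⟨C, hC, hKC⟩ := hK.exists_pos_norm_le
  rw [Metric.tendstoUniformlyOn_iff]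
  intro ε hε
  filter_upwards [(tendsto_zero_iff_norm_tendsto_zero.mp hf).eventually
    (gt_mem_nhds (div_pos hε hC))] with t ht x hx
  calc dist (0 : R) (x * f t) = ‖x * f t‖ := by rw [dist_zero_left]
    _ ≤ C * ‖f t‖ := (norm_mul_le _ _).trans (by gcongr; exact hKC x hx)
    _ < ε := by rwa [lt_div_iff₀' hC] at ht

theorem tendsto_exp_neg_mul_atTop {μ : ℝ} (hμ : 0 < μ) :
    Tendsto (fun t => exp (-μ * t)) atTop (𝓝 0) := by
  simpa only [neg_mul, Function.comp_def, id] using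
    tendsto_exp_neg_atTop_nhds_zero.comp (tendsto_id.const_mul_atTop hμ)

theorem integrableOn_Iic_mul_exp {μ : ℝ} (hμ : 0 < μ) {l : ℝ → ℝ}
    (hl : AEStronglyMeasurable l) {C : ℝ} (hC : ∀ s, |l s| ≤ C) (a : ℝ) :
    IntegrableOn (fun s => l s * exp (μ * s)) (Set.Iic a) :=
  (integrableOn_exp_mul_Iic hμ a).bdd_mul hl.restrict (ae_of_all _ hC)

theorem stmt3_general (μ Λℓ Λu : ℝ) (l : ℝ → ℝ)
    (hμ : 0 < μ) (hl : Continuous l)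
    (hbound : ∀ s, Λℓ ≤ l s ∧ l s ≤ Λu)
    (K : Set ℝ) (hKb : Bornology.IsBounded K) :
    TendstoUniformlyOn
      (fun t S₀ => S₀ * Real.exp (-μ * t) + ∫ s in (-t)..0, l s * Real.exp (μ * s))
      (fun _ => ∫ s in Set.Iic (0 : ℝ), l s * Real.exp (μ * s)) atTop K := by
  have hint := integrableOn_Iic_mul_exp hμ hl.aestronglyMeasurable
    (fun s => abs_le_max_abs_abs (hbound s).1 (hbound s).2) 0
  have hpullback := intervalIntegral_tendsto_integral_Iic 0 hint tendsto_neg_atTop_atBot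
  have hinitial := (tendsto_exp_neg_mul_atTop hμ).tendstoUniformlyOn_mul_of_isBounded hKb
  simpa only [Pi.add_def, Pi.zero_apply, zero_add] using
    hinitial.add (hpullback.tendstoUniformlyOn_const K)

theorem stmt3 (μ Λℓ Λu : ℝ) (l : ℝ → ℝ)
    (hμ : 0 < μ) (hl : Continuous l) (hΛℓ : 0 < Λℓ) (hΛ : Λℓ ≤ Λu)
    (hbound : ∀ s, Λℓ ≤ l s ∧ l s ≤ Λu)
    (K : Set ℝ) (hK : K ⊆ Set.Ici 0) (hKb : Bornology.IsBounded K) :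
    TendstoUniformlyOn
      (fun t S₀ => S₀ * Real.exp (-μ * t) + ∫ s in (-t)..0, l s * Real.exp (μ * s))
      (fun _ => ∫ s in Set.Iic (0 : ℝ), l s * Real.exp (μ * s)) atTop K :=
  stmt3_general μ Λℓ Λu l hμ hl hbound K hKb
end

section
/- Under the hypotheses of the eco-epidemiological system, for any nonnegative solution, limsup_{t→∞} (a^u S(t) + r I(t) + P(t)) ≤ Θ^u and liminf_{t→∞} (a^ℓ S(t) + r I(t) + P(t)) ≥ Θ^ℓ, where Θ^u = a^u Λ^u / min{μ, δ₁} and Θ^ℓ = max{0, (a^ℓ Λ^ℓ - δ₂ (Θ^u)²)/max{c, δ₁}}. -/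
/-!
Weighting the equations by `a^u`, `r` and `1`, the terms `g I` cancel while the predation term
`f P` and the infection term `β S I` enter `a^u S + r I + P` with nonpositive coefficients, so its
derivative is at most `a^u Λ^u - min{μ, δ₁} (a^u S + r I + P)`; a Gronwall comparison gives the
upper bound. In particular `P` is eventually below `Θ^u + ε`, which bounds the quadratic loss
`δ₂ P²`; with the weights `a^ℓ`, `r`, `1` the same terms enter with nonnegative coefficients, and
the reversed comparison gives the lower bound.
-/

open Real Filter Set Topology

theorem tendsto_gronwallBound_atTop {δ K ε : ℝ} (hK : K < 0) :
    Tendsto (gronwallBound δ K ε) atTop (𝓝 (-ε / K)) := by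
  rw [gronwallBound_of_K_ne_0 hK.ne]
  have hexp : Tendsto (fun x => exp (K * x)) atTop (𝓝 0) :=
    tendsto_exp_atBot.comp (tendsto_id.const_mul_atTop_of_neg hK)
  convert (hexp.const_mul δ).add ((hexp.sub_const 1).const_mul (ε / K)) using 2
  ring

section Comparison

variable {W w : ℝ → ℝ} {A m ε : ℝ}

theorem eventually_le_div_add_of_hasDerivAt (hm : 0 < m)
    (hW : ∀ᶠ t in atTop, HasDerivAt W (w t) t) (hw : ∀ᶠ t in atTop, w t ≤ A - m * W t)
    (hε : 0 < ε) : ∀ᶠ t in atTop, W t ≤ A / m + ε := by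
  obtain ⟨t₀, ht₀⟩ := eventually_atTop.1 (hW.and hw)
  have hbound : ∀ t, t₀ ≤ t → W t ≤ gronwallBound (W t₀) (-m) A (t - t₀) := fun t ht =>
    le_gronwallBound_of_liminf_deriv_right_le
      (fun x hx => (ht₀ x hx.1).1.continuousAt.continuousWithinAt)
      (fun x hx _ hr => (ht₀ x hx.1).1.hasDerivWithinAt.liminf_right_slope_le hr)
      le_rfl (fun x hx => by linarith [(ht₀ x hx.1).2]) t ⟨ht, le_rfl⟩
  have hlim : Tendsto (fun t => gronwallBound (W t₀) (-m) A (t - t₀)) atTop (𝓝 (A / m)) := by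
    have := (tendsto_gronwallBound_atTop (δ := W t₀) (ε := A) (neg_lt_zero.2 hm)).comp
      (tendsto_atTop_add_const_right _ (-t₀) tendsto_id)
    simpa only [neg_div_neg_eq, Function.comp_def, id, ← sub_eq_add_neg] using this
  filter_upwards [eventually_ge_atTop t₀, hlim.eventually (gt_mem_nhds (lt_add_of_pos_right _ hε))]
    with t ht hlt
  exact (hbound t ht).trans hlt.le

theorem eventually_div_sub_le_of_hasDerivAt (hm : 0 < m)
    (hW : ∀ᶠ t in atTop, HasDerivAt W (w t) t) (hw : ∀ᶠ t in atTop, A - m * W t ≤ w t)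
    (hε : 0 < ε) : ∀ᶠ t in atTop, A / m - ε ≤ W t := by
  have := eventually_le_div_add_of_hasDerivAt (W := -W) (A := -A) hm
    (hW.mono fun t h => h.neg) (hw.mono fun t h => by simp only [Pi.neg_apply]; linarith) hε
  filter_upwards [this] with t ht
  rw [Pi.neg_apply, neg_div] at ht
  linarith

end Comparison

section LimitsOfBounds

variable {α : Type*} {l : Filter α} {u : α → ℝ} {φ : ℝ → ℝ}

theorem limsup_le_of_forall_pos_eventually_le (hφ : ContinuousWithinAt φ (Ioi 0) 0)
    (h : ∀ ε > 0, ∀ᶠ x in l, u x ≤ φ ε) (hu : IsCoboundedUnder (· ≤ ·) l u) :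
    limsup u l ≤ φ 0 :=
  ge_of_tendsto hφ (eventually_nhdsWithin_of_forall fun ε hε => limsup_le_of_le hu (h ε hε))

theorem le_liminf_of_forall_pos_eventually_le (hφ : ContinuousWithinAt φ (Ioi 0) 0)
    (h : ∀ ε > 0, ∀ᶠ x in l, φ ε ≤ u x) (hu : IsCoboundedUnder (· ≥ ·) l u) :
    φ 0 ≤ liminf u l :=
  le_of_tendsto hφ (eventually_nhdsWithin_of_forall fun ε hε => le_liminf_of_le hu (h ε hε))

end LimitsOfBounds
section WeightedRate

variable {a k K μ β r c γ δ₁ δ₂ η Λ x s i p F G : ℝ}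

theorem weighted_rate_le (hγa : γ ≤ a) (hra : r ≤ a) (hkμ : k ≤ μ) (hkc : k ≤ c) (hkδ : k ≤ δ₁)
    (ha : 0 ≤ a) (hr : 0 ≤ r) (hβ : 0 ≤ β) (hδ₂ : 0 ≤ δ₂) (hx : x ≤ Λ)
    (hs : 0 ≤ s) (hi : 0 ≤ i) (hp : 0 ≤ p) (hF : 0 ≤ F) :
    a * (x - μ * s - F * p - β * s * i) + r * (β * s * i - η * G * i - c * i)
      + (γ * F * p + r * η * G * i - δ₁ * p - δ₂ * p ^ 2) ≤ a * Λ - k * (a * s + r * i + p) := by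
  nlinarith [mul_nonneg (mul_nonneg (sub_nonneg.2 hγa) hF) hp,
    mul_nonneg (mul_nonneg (mul_nonneg (sub_nonneg.2 hra) hβ) hs) hi,
    mul_nonneg hδ₂ (sq_nonneg p), mul_nonneg (mul_nonneg (sub_nonneg.2 hkμ) ha) hs,
    mul_nonneg (mul_nonneg (sub_nonneg.2 hkc) hr) hi, mul_nonneg (sub_nonneg.2 hkδ) hp,
    mul_nonneg ha (sub_nonneg.2 hx)]

theorem le_weighted_rate (haγ : a ≤ γ) (har : a ≤ r) (hμk : μ ≤ k) (hck : c ≤ k) (hδk : δ₁ ≤ k)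
    (ha : 0 ≤ a) (hr : 0 ≤ r) (hβ : 0 ≤ β) (hδ₂ : 0 ≤ δ₂) (hx : Λ ≤ x) (hpK : p ≤ K)
    (hs : 0 ≤ s) (hi : 0 ≤ i) (hp : 0 ≤ p) (hF : 0 ≤ F) :
    a * Λ - δ₂ * K ^ 2 - k * (a * s + r * i + p) ≤
      a * (x - μ * s - F * p - β * s * i) + r * (β * s * i - η * G * i - c * i)
        + (γ * F * p + r * η * G * i - δ₁ * p - δ₂ * p ^ 2) := by
  have hsq : p ^ 2 ≤ K ^ 2 := pow_le_pow_left₀ hp hpK 2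
  nlinarith [mul_nonneg (mul_nonneg (sub_nonneg.2 haγ) hF) hp,
    mul_nonneg (mul_nonneg (mul_nonneg (sub_nonneg.2 har) hβ) hs) hi,
    mul_le_mul_of_nonneg_left hsq hδ₂, mul_nonneg (mul_nonneg (sub_nonneg.2 hμk) ha) hs,
    mul_nonneg (mul_nonneg (sub_nonneg.2 hck) hr) hi, mul_nonneg (sub_nonneg.2 hδk) hp,
    mul_nonneg ha (sub_nonneg.2 hx)]

end WeightedRate

theorem stmt9_general (μ β r c γ δ₁ δ₂ η Λℓ Λu t₀ : ℝ)
    (l : ℝ → ℝ) (f g : ℝ → ℝ → ℝ → ℝ) (S I P : ℝ → ℝ)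
    (hμ : 0 < μ) (hβ : 0 < β) (hr : 0 < r) (hγ : 0 < γ)
    (hδ₁ : 0 < δ₁) (hδ₂ : 0 < δ₂) (hμc : μ < c)
    (hlb : ∀ t, Λℓ ≤ l t ∧ l t ≤ Λu)
    (hf_nonneg : ∀ x y z, 0 ≤ x → 0 ≤ y → 0 ≤ z → 0 ≤ f x y z)
    (hpos : ∀ t, t₀ ≤ t → 0 ≤ S t ∧ 0 ≤ I t ∧ 0 ≤ P t)
    (hS : ∀ t, t₀ ≤ t → HasDerivAt S
      (l t - μ * S t - f (S t) (I t) (P t) * P t - β * S t * I t) t)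
    (hI : ∀ t, t₀ ≤ t → HasDerivAt I
      (β * S t * I t - η * g (S t) (I t) (P t) * I t - c * I t) t)
    (hP : ∀ t, t₀ ≤ t → HasDerivAt P
      (γ * f (S t) (I t) (P t) * P t + r * η * g (S t) (I t) (P t) * I t
        - δ₁ * P t - δ₂ * (P t) ^ 2) t) :
    limsup (fun t => max γ r * S t + r * I t + P t) atTop ≤
      max γ r * Λu / min μ δ₁ ∧
    max 0 ((min γ r * Λℓ - δ₂ * (max γ r * Λu / min μ δ₁) ^ 2) / max c δ₁) ≤
      liminf (fun t => min γ r * S t + r * I t + P t) atTop := by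
  set au := max γ r
  set aℓ := min γ r
  set Θu := au * Λu / min μ δ₁
  have hau : 0 ≤ au := hr.le.trans (le_max_right _ _)
  have haℓ : 0 ≤ aℓ := le_min hγ.le hr.le
  have hsol : ∀ᶠ t in atTop, 0 ≤ S t ∧ 0 ≤ I t ∧ 0 ≤ P t ∧ 0 ≤ f (S t) (I t) (P t) :=
    (eventually_ge_atTop t₀).mono fun t ht =>
      let ⟨hs, hi, hp⟩ := hpos t ht
      ⟨hs, hi, hp, hf_nonneg _ _ _ hs hi hp⟩
  have hnonneg : ∀ a, 0 ≤ a → ∀ᶠ t in atTop, 0 ≤ a * S t + r * I t + P t := fun a ha =>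
    hsol.mono fun t ⟨hs, hi, hp, _⟩ => by positivity
  have hderiv := fun a : ℝ => (eventually_ge_atTop t₀).mono fun t ht =>
    (((hS t ht).const_mul a).add ((hI t ht).const_mul r)).add (hP t ht)
  have hupper : ∀ ε > 0, ∀ᶠ t in atTop, au * S t + r * I t + P t ≤ Θu + ε := fun ε hε =>
    eventually_le_div_add_of_hasDerivAt (lt_min hμ hδ₁) (hderiv au)
      (hsol.mono fun t ⟨hs, hi, hp, hF⟩ => weighted_rate_le (le_max_left _ _) (le_max_right _ _)
        (min_le_left _ _) ((min_le_left _ _).trans hμc.le) (min_le_right _ _) hau hr.le hβ.le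
        hδ₂.le (hlb t).2 hs hi hp hF) hε
  have hPupper : ∀ ε > 0, ∀ᶠ t in atTop, P t ≤ Θu + ε := fun ε hε => by
    filter_upwards [hupper ε hε, hsol] with t ht ⟨hs, hi, _⟩
    nlinarith [mul_nonneg hau hs, mul_nonneg hr.le hi]
  have hlower : ∀ ε > 0, ∀ᶠ t in atTop,
      (aℓ * Λℓ - δ₂ * (Θu + ε) ^ 2) / max c δ₁ - ε ≤ aℓ * S t + r * I t + P t := fun ε hε =>
    eventually_div_sub_le_of_hasDerivAt (lt_max_of_lt_right hδ₁) (hderiv aℓ)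
      ((hsol.and (hPupper ε hε)).mono fun t ⟨⟨hs, hi, hp, hF⟩, hpK⟩ =>
        le_weighted_rate (min_le_left _ _) (min_le_right _ _) (hμc.le.trans (le_max_left _ _))
          (le_max_left _ _) (le_max_right _ _) haℓ hr.le hβ.le hδ₂.le (hlb t).1 hpK hs hi hp hF) hε
  have hbdd : ∀ᶠ t in atTop, aℓ * S t + r * I t + P t ≤ Θu + 1 := by
    filter_upwards [hupper 1 one_pos, hsol] with t ht ⟨hs, _⟩
    nlinarith [mul_le_mul_of_nonneg_right (min_le_max : aℓ ≤ au) hs]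
  have hcob : IsCoboundedUnder (· ≥ ·) atTop fun t => aℓ * S t + r * I t + P t :=
    isCoboundedUnder_ge_of_eventually_le _ hbdd
  refine ⟨?_, max_le (le_liminf_of_le hcob (hnonneg aℓ haℓ)) ?_⟩
  · simpa using limsup_le_of_forall_pos_eventually_le (φ := fun ε => Θu + ε)
      (by fun_prop : Continuous _).continuousWithinAt hupper
      (isCoboundedUnder_le_of_eventually_le _ (hnonneg au hau))
  · simpa using le_liminf_of_forall_pos_eventually_le
      (φ := fun ε => (aℓ * Λℓ - δ₂ * (Θu + ε) ^ 2) / max c δ₁ - ε)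
      (by fun_prop : Continuous _).continuousWithinAt hlower hcob

theorem stmt9 (μ β r c γ δ₁ δ₂ η Λℓ Λu t₀ : ℝ)
    (l : ℝ → ℝ) (f g : ℝ → ℝ → ℝ → ℝ) (S I P : ℝ → ℝ)
    (hμ : 0 < μ) (hβ : 0 < β) (hr : 0 < r) (hc : 0 < c) (hγ : 0 < γ)
    (hδ₁ : 0 < δ₁) (hδ₂ : 0 < δ₂) (hη : 0 < η) (hμc : μ < c)
    (hΛℓ : 0 < Λℓ) (hΛ : Λℓ ≤ Λu)
    (hl : Continuous l) (hlb : ∀ t, Λℓ ≤ l t ∧ l t ≤ Λu)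
    (hf_nonneg : ∀ x y z, 0 ≤ x → 0 ≤ y → 0 ≤ z → 0 ≤ f x y z)
    (hg_nonneg : ∀ x y z, 0 ≤ x → 0 ≤ y → 0 ≤ z → 0 ≤ g x y z)
    (hpos : ∀ t, t₀ ≤ t → 0 ≤ S t ∧ 0 ≤ I t ∧ 0 ≤ P t)
    (hS : ∀ t, t₀ ≤ t → HasDerivAt S
      (l t - μ * S t - f (S t) (I t) (P t) * P t - β * S t * I t) t)
    (hI : ∀ t, t₀ ≤ t → HasDerivAt I
      (β * S t * I t - η * g (S t) (I t) (P t) * I t - c * I t) t)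
    (hP : ∀ t, t₀ ≤ t → HasDerivAt P
      (γ * f (S t) (I t) (P t) * P t + r * η * g (S t) (I t) (P t) * I t
        - δ₁ * P t - δ₂ * (P t) ^ 2) t) :
    limsup (fun t => max γ r * S t + r * I t + P t) atTop ≤
      max γ r * Λu / min μ δ₁ ∧
    max 0 ((min γ r * Λℓ - δ₂ * (max γ r * Λu / min μ δ₁) ^ 2) / max c δ₁) ≤
      liminf (fun t => min γ r * S t + r * I t + P t) atTop :=
  stmt9_general μ β r c γ δ₁ δ₂ η Λℓ Λu t₀ l f g S I P hμ hβ hr hγ hδ₁ hδ₂ hμc hlb hf_nonneg hpos hS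
    hI hP
end

section
/- Consider the eco-epidemiological system with nonnegative solution (S, I, P). Suppose δ > 0 and that for all t ≥ T we have a^u S(t) + r I(t) + P(t) ≤ Θ^u + δ. Then for all t ≥ T, S'(t) ≥ ξ_δ - ζ_δ S(t), where ξ_δ = Λ^ℓ - f((Θ^u+δ)/a^u, 0, 0)·(Θ^u+δ) and ζ_δ = μ + β (Θ^u+δ)/r. Consequently liminf_{t→∞} S(t) ≥ ξ_δ/ζ_δ; in particular if ξ_δ > 0 susceptible prey persist. -/
/-!
The total weighted population `a^u S + r I + P` is at most `Θ = Θ^u + δ` from time `T` on, so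
`S ≤ Θ / a^u`, `I ≤ Θ / r` and `P ≤ Θ` there. Since `f` is nondecreasing in `S` and
nonincreasing in `I` and `P`, predation is at most `f (Θ / a^u, 0, 0) Θ` and infection at most
`β (Θ / r) S`, which gives the linear differential inequality `S' ≥ ξ - ζ S`. Multiplying by
the integrating factor `exp (ζ t)` compares `S` with the solution of `y' = ξ - ζ y`, which tends
to `ξ / ζ`.
-/

open Real Filter Set

section LinearDifferentialInequality

variable {x x' : ℝ → ℝ} {a b T : ℝ}

theorem monotoneOn_sub_div_mul_exp (hb : b ≠ 0) (hx : ∀ t ≥ T, HasDerivAt x (x' t) t)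
    (hx' : ∀ t ≥ T, a - b * x t ≤ x' t) :
    MonotoneOn (fun t => (x t - a / b) * exp (b * t)) (Ici T) := by
  have hderiv : ∀ t ≥ T, HasDerivAt (fun t => (x t - a / b) * exp (b * t))
      ((x' t - (a - b * x t)) * exp (b * t)) t := by
    intro t ht
    have hexp : HasDerivAt (fun t => exp (b * t)) (exp (b * t) * b) t := by
      simpa using ((hasDerivAt_id t).const_mul b).exp
    refine (((hx t ht).sub_const (a / b)).mul hexp).congr_deriv ?_
    linear_combination -exp (b * t) * div_mul_cancel₀ a hb
  refine monotoneOn_of_hasDerivWithinAt_nonneg (convex_Ici T)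
    (fun t ht => (hderiv t ht).continuousAt.continuousWithinAt)
    (fun t ht => (hderiv t (interior_subset ht)).hasDerivWithinAt)
    (fun t ht => mul_nonneg ?_ (exp_pos _).le)
  linarith [hx' t (interior_subset ht)]

theorem add_sub_div_mul_exp_le_of_deriv_ge (hb : b ≠ 0) (hx : ∀ t ≥ T, HasDerivAt x (x' t) t)
    (hx' : ∀ t ≥ T, a - b * x t ≤ x' t) {t : ℝ} (ht : T ≤ t) :
    a / b + (x T - a / b) * exp (-(b * (t - T))) ≤ x t := by
  have hmono : (x T - a / b) * exp (b * T) ≤ (x t - a / b) * exp (b * t) :=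
    monotoneOn_sub_div_mul_exp hb hx hx' self_mem_Ici ht ht
  have hsplit : exp (b * T) = exp (-(b * (t - T))) * exp (b * t) := by
    rw [← exp_add]; ring_nf
  rw [hsplit, ← mul_assoc, mul_le_mul_iff_of_pos_right (exp_pos _)] at hmono
  linarith

theorem div_le_liminf_of_deriv_ge (hb : 0 < b) (hx : ∀ t ≥ T, HasDerivAt x (x' t) t)
    (hx' : ∀ t ≥ T, a - b * x t ≤ x' t) (hbdd : IsBoundedUnder (· ≤ ·) atTop x) :
    a / b ≤ liminf x atTop := by
  set y := fun t => a / b + (x T - a / b) * exp (-(b * (t - T)))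
  have hy : Tendsto y atTop (nhds (a / b)) := by
    have hexp : Tendsto (fun t => exp (-(b * (t - T)))) atTop (nhds 0) :=
      tendsto_exp_neg_atTop_nhds_zero.comp
        ((tendsto_atTop_add_const_right _ (-T) tendsto_id).const_mul_atTop hb)
    simpa using (hexp.const_mul (x T - a / b)).const_add (a / b)
  have hyx : y ≤ᶠ[atTop] x :=
    eventually_atTop.2 ⟨T, fun t ht => add_sub_div_mul_exp_le_of_deriv_ge hb.ne' hx hx' ht⟩
  calc a / b = liminf y atTop := hy.liminf_eq.symm
    _ ≤ liminf x atTop := liminf_le_liminf hyx hy.isBoundedUnder_ge hbdd.isCoboundedUnder_ge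

end LinearDifferentialInequality

section EcoEpidemiological

theorem le_div_of_weighted_sum_le {A r Θ s i p : ℝ} (hA : 0 < A) (hr : 0 < r)
    (hs : 0 ≤ s) (hi : 0 ≤ i) (hp : 0 ≤ p) (hsum : A * s + r * i + p ≤ Θ) :
    s ≤ Θ / A ∧ i ≤ Θ / r ∧ p ≤ Θ := by
  refine ⟨(le_div_iff₀ hA).2 ?_, (le_div_iff₀ hr).2 ?_, ?_⟩ <;>
    nlinarith [mul_nonneg hA.le hs, mul_nonneg hr.le hi]

variable {f : ℝ → ℝ → ℝ → ℝ}

theorem le_apply_zero_zero_of_monotone (hfS : ∀ y z, MonotoneOn (fun x => f x y z) (Ici 0))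
    (hfI : ∀ x z, AntitoneOn (fun y => f x y z) (Ici 0))
    (hfP : ∀ x y, AntitoneOn (fun z => f x y z) (Ici 0))
    {s s' i p : ℝ} (hs : 0 ≤ s) (hss' : s ≤ s') (hi : 0 ≤ i) (hp : 0 ≤ p) :
    f s i p ≤ f s' 0 0 :=
  calc f s i p ≤ f s 0 p := hfI s p self_mem_Ici hi hi
    _ ≤ f s 0 0 := hfP s 0 self_mem_Ici hp hp
    _ ≤ f s' 0 0 := hfS 0 0 hs (hs.trans hss') hss'

theorem predation_add_infection_le
    (hf_nonneg : ∀ x y z, 0 ≤ x → 0 ≤ y → 0 ≤ z → 0 ≤ f x y z)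
    (hfS : ∀ y z, MonotoneOn (fun x => f x y z) (Ici 0))
    (hfI : ∀ x z, AntitoneOn (fun y => f x y z) (Ici 0))
    (hfP : ∀ x y, AntitoneOn (fun z => f x y z) (Ici 0))
    {A r β Θ s i p : ℝ} (hA : 0 < A) (hr : 0 < r) (hβ : 0 ≤ β)
    (hs : 0 ≤ s) (hi : 0 ≤ i) (hp : 0 ≤ p) (hsum : A * s + r * i + p ≤ Θ) :
    f s i p * p + β * s * i ≤ f (Θ / A) 0 0 * Θ + β * (Θ / r) * s := by
  obtain ⟨hsΘ, hiΘ, hpΘ⟩ := le_div_of_weighted_sum_le hA hr hs hi hp hsum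
  have hpred : f s i p * p ≤ f (Θ / A) 0 0 * Θ :=
    mul_le_mul (le_apply_zero_zero_of_monotone hfS hfI hfP hs hsΘ hi hp) hpΘ hp
      (hf_nonneg _ _ _ (hs.trans hsΘ) le_rfl le_rfl)
  have hinf : β * s * i ≤ β * s * (Θ / r) := mul_le_mul_of_nonneg_left hiΘ (mul_nonneg hβ hs)
  linarith

end EcoEpidemiological
theorem stmt10_general (μ β r γ δ₁ Λℓ Λu t₀ T δ : ℝ)
    (l : ℝ → ℝ) (f : ℝ → ℝ → ℝ → ℝ) (S I P : ℝ → ℝ)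
    (hμ : 0 < μ) (hβ : 0 < β) (hr : 0 < r) (ht₀T : t₀ ≤ T)
    (hlb : ∀ t, Λℓ ≤ l t ∧ l t ≤ Λu)
    (hf_nonneg : ∀ x y z, 0 ≤ x → 0 ≤ y → 0 ≤ z → 0 ≤ f x y z)
    (hfS : ∀ y z, MonotoneOn (fun x => f x y z) (Set.Ici 0))
    (hfI : ∀ x z, AntitoneOn (fun y => f x y z) (Set.Ici 0))
    (hfP : ∀ x y, AntitoneOn (fun z => f x y z) (Set.Ici 0))
    (hpos : ∀ t, t₀ ≤ t → 0 ≤ S t ∧ 0 ≤ I t ∧ 0 ≤ P t)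
    (hS : ∀ t, t₀ ≤ t → HasDerivAt S
      (l t - μ * S t - f (S t) (I t) (P t) * P t - β * S t * I t) t)
    (hbound : ∀ t, T ≤ t →
      max γ r * S t + r * I t + P t ≤ max γ r * Λu / min μ δ₁ + δ) :
    (∀ t, T ≤ t →
      (Λℓ - f ((max γ r * Λu / min μ δ₁ + δ) / max γ r) 0 0 *
          (max γ r * Λu / min μ δ₁ + δ)) -
        (μ + β * ((max γ r * Λu / min μ δ₁ + δ) / r)) * S t ≤
      l t - μ * S t - f (S t) (I t) (P t) * P t - β * S t * I t) ∧
    (Λℓ - f ((max γ r * Λu / min μ δ₁ + δ) / max γ r) 0 0 *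
        (max γ r * Λu / min μ δ₁ + δ)) /
      (μ + β * ((max γ r * Λu / min μ δ₁ + δ) / r)) ≤
      liminf S atTop := by
  set A := max γ r
  set Θ := A * Λu / min μ δ₁ + δ
  have hA : 0 < A := lt_max_of_lt_right hr
  have hpos' : ∀ t ≥ T, 0 ≤ S t ∧ 0 ≤ I t ∧ 0 ≤ P t := fun t ht => hpos t (ht₀T.trans ht)
  have hbounds : ∀ t ≥ T, S t ≤ Θ / A ∧ I t ≤ Θ / r ∧ P t ≤ Θ := by
    intro t ht
    obtain ⟨hs, hi, hp⟩ := hpos' t ht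
    exact le_div_of_weighted_sum_le hA hr hs hi hp (hbound t ht)
  have hloss : ∀ t ≥ T, f (S t) (I t) (P t) * P t + β * S t * I t ≤
      f (Θ / A) 0 0 * Θ + β * (Θ / r) * S t := by
    intro t ht
    obtain ⟨hs, hi, hp⟩ := hpos' t ht
    exact predation_add_infection_le hf_nonneg hfS hfI hfP hA hr hβ.le hs hi hp (hbound t ht)
  have hineq : ∀ t, T ≤ t → Λℓ - f (Θ / A) 0 0 * Θ - (μ + β * (Θ / r)) * S t ≤
      l t - μ * S t - f (S t) (I t) (P t) * P t - β * S t * I t := fun t ht => by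
    linarith [hloss t ht, (hlb t).1]
  have hΘ : 0 ≤ Θ := (hpos' T le_rfl).2.2.trans (hbounds T le_rfl).2.2
  refine ⟨hineq, div_le_liminf_of_deriv_ge ?_ (fun t ht => hS t (ht₀T.trans ht)) hineq ?_⟩
  · exact add_pos_of_pos_of_nonneg hμ (mul_nonneg hβ.le (div_nonneg hΘ hr.le))
  · exact isBoundedUnder_of_eventually_le (eventually_atTop.2 ⟨T, fun t ht => (hbounds t ht).1⟩)

theorem stmt10 (μ β r c γ δ₁ δ₂ η Λℓ Λu t₀ T δ : ℝ)
    (l : ℝ → ℝ) (f g : ℝ → ℝ → ℝ → ℝ) (S I P : ℝ → ℝ)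
    (hμ : 0 < μ) (hβ : 0 < β) (hr : 0 < r) (hc : 0 < c) (hγ : 0 < γ)
    (hδ₁ : 0 < δ₁) (hδ₂ : 0 < δ₂) (hη : 0 < η) (hδ : 0 < δ) (ht₀T : t₀ ≤ T)
    (hΛℓ : 0 < Λℓ) (hΛ : Λℓ ≤ Λu)
    (hl : Continuous l) (hlb : ∀ t, Λℓ ≤ l t ∧ l t ≤ Λu)
    (hf_nonneg : ∀ x y z, 0 ≤ x → 0 ≤ y → 0 ≤ z → 0 ≤ f x y z)
    (hg_nonneg : ∀ x y z, 0 ≤ x → 0 ≤ y → 0 ≤ z → 0 ≤ g x y z)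
    (hfS : ∀ y z, MonotoneOn (fun x => f x y z) (Set.Ici 0))
    (hfI : ∀ x z, AntitoneOn (fun y => f x y z) (Set.Ici 0))
    (hfP : ∀ x y, AntitoneOn (fun z => f x y z) (Set.Ici 0))
    (hpos : ∀ t, t₀ ≤ t → 0 ≤ S t ∧ 0 ≤ I t ∧ 0 ≤ P t)
    (hS : ∀ t, t₀ ≤ t → HasDerivAt S
      (l t - μ * S t - f (S t) (I t) (P t) * P t - β * S t * I t) t)
    (hI : ∀ t, t₀ ≤ t → HasDerivAt I
      (β * S t * I t - η * g (S t) (I t) (P t) * I t - c * I t) t)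
    (hP : ∀ t, t₀ ≤ t → HasDerivAt P
      (γ * f (S t) (I t) (P t) * P t + r * η * g (S t) (I t) (P t) * I t
        - δ₁ * P t - δ₂ * (P t) ^ 2) t)
    (hbound : ∀ t, T ≤ t →
      max γ r * S t + r * I t + P t ≤ max γ r * Λu / min μ δ₁ + δ) :
    (∀ t, T ≤ t →
      (Λℓ - f ((max γ r * Λu / min μ δ₁ + δ) / max γ r) 0 0 *
          (max γ r * Λu / min μ δ₁ + δ)) -
        (μ + β * ((max γ r * Λu / min μ δ₁ + δ) / r)) * S t ≤
      l t - μ * S t - f (S t) (I t) (P t) * P t - β * S t * I t) ∧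
    (Λℓ - f ((max γ r * Λu / min μ δ₁ + δ) / max γ r) 0 0 *
        (max γ r * Λu / min μ δ₁ + δ)) /
      (μ + β * ((max γ r * Λu / min μ δ₁ + δ) / r)) ≤
      liminf S atTop :=
  stmt10_general μ β r γ δ₁ Λℓ Λu t₀ T δ l f S I P hμ hβ hr ht₀T hlb hf_nonneg hfS hfI hfP hpos hS
    hbound
end

section
/- Consider the eco-epidemiological system with nonnegative solution (S, I, P). Assume β Θ^u / a^u < c and γ f(Θ^u/a^u, 0, 0) < δ₁. Then r I(t) + P(t) → 0 as t → ∞; i.e. infected prey and predators simultaneously go extinct. -/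
open Real Filter

/-!
Along a solution, `(r I + P)' = (β S - c) r I + (γ f(S, I, P) - δ₁ - δ₂ P) P`. Since
`S' ≤ Λᵘ - μ S`, eventually `S ≤ B` for any `B > Λᵘ / μ`, in particular for some `B > Θᵘ / aᵘ`
at which both thresholds still hold strictly. As `f` increases in `S` and decreases in `I, P`,
from then on `(r I + P)' ≤ -ε (r I + P)` with `ε = min (c - β B) (δ₁ - γ f(B, 0, 0)) > 0`,
and Grönwall gives exponential decay of `r I + P`.
-/

section Gronwall

variable {u u' : ℝ → ℝ} {k a : ℝ}

theorem le_mul_exp_of_hasDerivAt_le_neg_mul (hd : ∀ t ≥ a, HasDerivAt u (u' t) t)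
    (hb : ∀ t ≥ a, u' t ≤ -k * u t) {t : ℝ} (ht : a ≤ t) :
    u t ≤ u a * exp (-k * (t - a)) := by
  have hv : ∀ s ≥ a, HasDerivAt (fun s => u s * exp (k * s))
      ((u' s + k * u s) * exp (k * s)) s := fun s hs =>
    ((hd s hs).mul ((hasDerivAt_id' s).const_mul k).exp).congr_deriv (by ring)
  have hanti : AntitoneOn (fun s => u s * exp (k * s)) (Set.Ici a) := by
    refine antitoneOn_of_hasDerivWithinAt_nonpos (f' := fun s => (u' s + k * u s) * exp (k * s))
      (convex_Ici a) (fun s hs => (hv s hs).continuousAt.continuousWithinAt) (fun s hs => ?_) (fun s hs => ?_)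
    all_goals rw [interior_Ici] at hs
    · exact (hv s hs.le).hasDerivWithinAt
    · exact mul_nonpos_of_nonpos_of_nonneg (by linarith [hb s hs.le]) (exp_pos _).le
  have key := hanti Set.self_mem_Ici ht ht
  rw [← le_div_iff₀ (exp_pos _), mul_div_assoc, ← exp_sub] at key
  rwa [show k * a - k * t = -k * (t - a) by ring] at key

theorem tendsto_mul_exp_neg_mul_sub (C : ℝ) (hk : 0 < k) :
    Tendsto (fun t => C * exp (-k * (t - a))) atTop (nhds 0) := by
  have : Tendsto (fun t => -k * (t - a)) atTop atBot :=
    (tendsto_atTop_add_const_right _ _ tendsto_id).const_mul_atTop_of_neg (neg_neg_of_pos hk)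
  simpa using (tendsto_exp_atBot.comp this).const_mul C

theorem eventually_le_of_hasDerivAt_le_sub_mul {Λ B : ℝ} (hk : 0 < k)
    (hd : ∀ t ≥ a, HasDerivAt u (u' t) t) (hb : ∀ t ≥ a, u' t ≤ Λ - k * u t) (hB : Λ / k < B) :
    ∀ᶠ t in atTop, u t ≤ B := by
  have hdecay : ∀ t ≥ a, u t - Λ / k ≤ (u a - Λ / k) * exp (-k * (t - a)) :=
    fun t ↦ le_mul_exp_of_hasDerivAt_le_neg_mul (u := fun t => u t - Λ / k)
      (fun s hs => (hd s hs).sub_const _) fun s hs => by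
        have hrw : -k * (u s - Λ / k) = Λ - k * u s := by field_simp; ring
        exact hrw ▸ hb s hs
  filter_upwards [(tendsto_mul_exp_neg_mul_sub (u a - Λ / k) hk).eventually_lt_const
    (sub_pos.2 hB), eventually_ge_atTop a] with t hsmall ht
  exact ((sub_lt_sub_iff_right _).1 ((hdecay t ht).trans_lt hsmall)).le

theorem tendsto_zero_of_hasDerivAt_le_neg_mul (hk : 0 < k)
    (hd : ∀ t ≥ a, HasDerivAt u (u' t) t) (hb : ∀ t ≥ a, u' t ≤ -k * u t)
    (hu : ∀ t ≥ a, 0 ≤ u t) : Tendsto u atTop (nhds 0) :=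
  tendsto_of_tendsto_of_tendsto_of_le_of_le' tendsto_const_nhds
    (tendsto_mul_exp_neg_mul_sub (u a) hk) (eventually_ge_atTop a |>.mono hu)
    (eventually_ge_atTop a |>.mono fun _ ht => le_mul_exp_of_hasDerivAt_le_neg_mul hd hb ht)

end Gronwall

theorem exists_gt_lt_and_lt_of_continuousAt {φ ψ : ℝ → ℝ} {x c d : ℝ} (hφ : ContinuousAt φ x)
    (hψ : ContinuousAt ψ x) (hφx : φ x < c) (hψx : ψ x < d) : ∃ y > x, φ y < c ∧ ψ y < d :=
  ((eventually_mem_nhdsWithin (s := Set.Ioi x)).and <| ((hφ.eventually_lt_const hφx).and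
    (hψ.eventually_lt_const hψx)).filter_mono nhdsWithin_le_nhds).exists

theorem le_apply_zero_zero_of_monotone_antitone {f : ℝ → ℝ → ℝ → ℝ}
    (hfS : ∀ y z, MonotoneOn (fun x => f x y z) (Set.Ici 0))
    (hfI : ∀ x z, AntitoneOn (fun y => f x y z) (Set.Ici 0))
    (hfP : ∀ x y, AntitoneOn (fun z => f x y z) (Set.Ici 0))
    {x y z B : ℝ} (hx : 0 ≤ x) (hy : 0 ≤ y) (hz : 0 ≤ z) (hxB : x ≤ B) : f x y z ≤ f B 0 0 :=
  calc f x y z ≤ f x 0 z := hfI x z Set.self_mem_Ici hy hy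
    _ ≤ f x 0 0 := hfP x 0 Set.self_mem_Ici hz hz
    _ ≤ f B 0 0 := hfS 0 0 hx (hx.trans hxB) hxB

theorem infected_add_predator_deriv_le {β c γ δ₁ δ₂ η r ε s i p F G : ℝ} (hr : 0 ≤ r)
    (hδ₂ : 0 ≤ δ₂) (hi : 0 ≤ i) (hp : 0 ≤ p) (hI : β * s - c ≤ -ε) (hP : γ * F - δ₁ ≤ -ε) :
    r * (β * s * i - η * G * i - c * i) + (γ * F * p + r * η * G * i - δ₁ * p - δ₂ * p ^ 2)
      ≤ -ε * (r * i + p) :=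
  calc _ = (β * s - c) * (r * i) + (γ * F - δ₁ - δ₂ * p) * p := by ring
    _ ≤ -ε * (r * i) + -ε * p :=
      add_le_add (mul_le_mul_of_nonneg_right hI (mul_nonneg hr hi))
        (mul_le_mul_of_nonneg_right (by linarith [mul_nonneg hδ₂ hp]) hp)
    _ = -ε * (r * i + p) := by ring

theorem stmt11_general (μ β r c γ δ₁ δ₂ η Λℓ Λu t₀ : ℝ)
    (l : ℝ → ℝ) (f g : ℝ → ℝ → ℝ → ℝ) (S I P : ℝ → ℝ)
    (hμ : 0 < μ) (hβ : 0 < β) (hr : 0 < r) (hγ : 0 < γ)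
    (hδ₁ : 0 < δ₁) (hδ₂ : 0 < δ₂)
    (hΛℓ : 0 < Λℓ) (hΛ : Λℓ ≤ Λu)
    (hlb : ∀ t, Λℓ ≤ l t ∧ l t ≤ Λu)
    (hf_cont : Continuous (fun p : ℝ × ℝ × ℝ => f p.1 p.2.1 p.2.2))
    (hf_nonneg : ∀ x y z, 0 ≤ x → 0 ≤ y → 0 ≤ z → 0 ≤ f x y z)
    (hfS : ∀ y z, MonotoneOn (fun x => f x y z) (Set.Ici 0))
    (hfI : ∀ x z, AntitoneOn (fun y => f x y z) (Set.Ici 0))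
    (hfP : ∀ x y, AntitoneOn (fun z => f x y z) (Set.Ici 0))
    (hpos : ∀ t, t₀ ≤ t → 0 ≤ S t ∧ 0 ≤ I t ∧ 0 ≤ P t)
    (hS : ∀ t, t₀ ≤ t → HasDerivAt S
      (l t - μ * S t - f (S t) (I t) (P t) * P t - β * S t * I t) t)
    (hI : ∀ t, t₀ ≤ t → HasDerivAt I
      (β * S t * I t - η * g (S t) (I t) (P t) * I t - c * I t) t)
    (hP : ∀ t, t₀ ≤ t → HasDerivAt P
      (γ * f (S t) (I t) (P t) * P t + r * η * g (S t) (I t) (P t) * I t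
        - δ₁ * P t - δ₂ * (P t) ^ 2) t)
    (hthr1 : β * (max γ r * Λu / min μ δ₁) / max γ r < c)
    (hthr2 : γ * f (max γ r * Λu / min μ δ₁ / max γ r) 0 0 < δ₁) :
    Tendsto (fun t => r * I t + P t) atTop (nhds 0) := by
  have hΘ : max γ r * Λu / min μ δ₁ / max γ r = Λu / min μ δ₁ := by
    rw [mul_div_assoc, mul_div_cancel_left₀ _ (lt_max_of_lt_left hγ).ne']
  rw [mul_div_assoc, hΘ] at hthr1
  rw [hΘ] at hthr2
  set Θ := Λu / min μ δ₁
  obtain ⟨B, hΘB, hβB, hfB⟩ : ∃ B > Θ, β * B < c ∧ γ * f B 0 0 < δ₁ :=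
    exists_gt_lt_and_lt_of_continuousAt (continuous_const_mul β).continuousAt
      (continuous_const.mul (hf_cont.comp (by fun_prop :
        Continuous fun x : ℝ => (x, (0 : ℝ), (0 : ℝ))))).continuousAt hthr1 hthr2
  have hS_le : ∀ᶠ t in atTop, t₀ ≤ t ∧ S t ≤ B := by
    refine (eventually_ge_atTop t₀).and (eventually_le_of_hasDerivAt_le_sub_mul (Λ := Λu) hμ hS
      (fun t ht => ?_) ?_)
    · obtain ⟨hS0, hI0, hP0⟩ := hpos t ht
      linarith [(hlb t).2, mul_nonneg (hf_nonneg _ _ _ hS0 hI0 hP0) hP0,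
        mul_nonneg (mul_nonneg hβ.le hS0) hI0]
    · exact (div_le_div_of_nonneg_left (hΛℓ.le.trans hΛ) (lt_min hμ hδ₁)
        (min_le_left _ _)).trans_lt hΘB
  obtain ⟨T, hT⟩ := eventually_atTop.mp hS_le
  refine tendsto_zero_of_hasDerivAt_le_neg_mul (a := T) (lt_min (sub_pos.2 hβB) (sub_pos.2 hfB))
    (fun t ht => ((hI t (hT t ht).1).const_mul r).add (hP t (hT t ht).1))
    (fun t ht => ?_) (fun t ht => ?_)
  all_goals obtain ⟨ht₀, hSB⟩ := hT t ht
  all_goals obtain ⟨hS0, hI0, hP0⟩ := hpos t ht₀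
  · refine infected_add_predator_deriv_le hr.le hδ₂.le hI0 hP0 ?_ ?_
    · linarith [min_le_left (c - β * B) (δ₁ - γ * f B 0 0),
        mul_le_mul_of_nonneg_left hSB hβ.le]
    · linarith [min_le_right (c - β * B) (δ₁ - γ * f B 0 0), mul_le_mul_of_nonneg_left
        (le_apply_zero_zero_of_monotone_antitone hfS hfI hfP hS0 hI0 hP0 hSB) hγ.le]
  · positivity

theorem stmt11 (μ β r c γ δ₁ δ₂ η Λℓ Λu t₀ : ℝ)
    (l : ℝ → ℝ) (f g : ℝ → ℝ → ℝ → ℝ) (S I P : ℝ → ℝ)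
    (hμ : 0 < μ) (hβ : 0 < β) (hr : 0 < r) (hc : 0 < c) (hγ : 0 < γ)
    (hδ₁ : 0 < δ₁) (hδ₂ : 0 < δ₂) (hη : 0 < η)
    (hΛℓ : 0 < Λℓ) (hΛ : Λℓ ≤ Λu)
    (hl : Continuous l) (hlb : ∀ t, Λℓ ≤ l t ∧ l t ≤ Λu)
    (hf_cont : Continuous (fun p : ℝ × ℝ × ℝ => f p.1 p.2.1 p.2.2))
    (hf_nonneg : ∀ x y z, 0 ≤ x → 0 ≤ y → 0 ≤ z → 0 ≤ f x y z)
    (hg_nonneg : ∀ x y z, 0 ≤ x → 0 ≤ y → 0 ≤ z → 0 ≤ g x y z)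
    (hfS : ∀ y z, MonotoneOn (fun x => f x y z) (Set.Ici 0))
    (hfI : ∀ x z, AntitoneOn (fun y => f x y z) (Set.Ici 0))
    (hfP : ∀ x y, AntitoneOn (fun z => f x y z) (Set.Ici 0))
    (hpos : ∀ t, t₀ ≤ t → 0 ≤ S t ∧ 0 ≤ I t ∧ 0 ≤ P t)
    (hS : ∀ t, t₀ ≤ t → HasDerivAt S
      (l t - μ * S t - f (S t) (I t) (P t) * P t - β * S t * I t) t)
    (hI : ∀ t, t₀ ≤ t → HasDerivAt I
      (β * S t * I t - η * g (S t) (I t) (P t) * I t - c * I t) t)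
    (hP : ∀ t, t₀ ≤ t → HasDerivAt P
      (γ * f (S t) (I t) (P t) * P t + r * η * g (S t) (I t) (P t) * I t
        - δ₁ * P t - δ₂ * (P t) ^ 2) t)
    (hthr1 : β * (max γ r * Λu / min μ δ₁) / max γ r < c)
    (hthr2 : γ * f (max γ r * Λu / min μ δ₁ / max γ r) 0 0 < δ₁) :
    Tendsto (fun t => r * I t + P t) atTop (nhds 0) :=
  stmt11_general μ β r c γ δ₁ δ₂ η Λℓ Λu t₀ l f g S I P hμ hβ hr hγ hδ₁ hδ₂ hΛℓ hΛ hlb hf_cont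
    hf_nonneg hfS hfI hfP hpos hS hI hP hthr1 hthr2
end

section
/- For the Holling-type-I eco-epidemiological system S' = λ(t) - μS - SP - βSI, I' = βSI - ηIP - cI, P' = γSP + IP - δ₁P - δ₂P², with positive parameters and λ(t) ∈ [Λℓ, Λu] ⊂ (0,∞): if β Λ^u < c·min{μ, δ₁} and γ Λ^u < δ₁·min{μ, δ₁}, then every nonnegative solution satisfies I(t) + P(t) → 0 as t → ∞. -/
/-!
Along solutions, `S' + μ S ≤ Λᵘ`, so `S` eventually stays below any `s > Λᵘ / μ`. The thresholds
allow such an `s` with `β s < c` and `γ s < δ₁`. Then `I' + (c - β s) I ≤ 0`, so `I` decays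
exponentially; once `I ≤ κ := (δ₁ - γ s) / 2` we also get `P' + κ P ≤ 0`, so `P` decays as well.
-/

open Real Filter Set Topology

section LinearDifferentialInequality

variable {f f' : ℝ → ℝ} {κ C T : ℝ}

/-- The integrating factor makes `(f s - C / κ) * exp (κ * s)` antitone. -/
theorem le_of_hasDerivAt_add_mul_le (hκ : κ ≠ 0) (hf : ∀ t, T ≤ t → HasDerivAt f (f' t) t)
    (hle : ∀ t, T ≤ t → f' t + κ * f t ≤ C) {t : ℝ} (ht : T ≤ t) :
    f t ≤ (f T - C / κ) * exp (-(κ * (t - T))) + C / κ := by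
  set g : ℝ → ℝ := fun s => (f s - C / κ) * exp (κ * s)
  have hg : ∀ s, T ≤ s → HasDerivAt g ((f' s + κ * f s - C) * exp (κ * s)) s := by
    intro s hs
    have hexp : HasDerivAt (fun s => exp (κ * s)) (exp (κ * s) * κ) s :=
      ((hasDerivAt_id s).const_mul κ).exp.congr_deriv (by simp)
    refine (((hf s hs).sub_const (C / κ)).mul hexp).congr_deriv ?_
    field_simp
    ring
  have hg_anti : AntitoneOn g (Ici T) := by
    refine antitoneOn_of_deriv_nonpos (convex_Ici T)
      (fun s hs => (hg s hs).continuousAt.continuousWithinAt) ?_ ?_ <;>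
      simp only [interior_Ici] <;> intro s hs
    · exact (hg s hs.le).differentiableAt.differentiableWithinAt
    · rw [(hg s hs.le).deriv]
      exact mul_nonpos_of_nonpos_of_nonneg (by linarith [hle s hs.le]) (exp_pos _).le
  have hgt : (f t - C / κ) * exp (κ * t) ≤ (f T - C / κ) * exp (κ * T) :=
    hg_anti self_mem_Ici ht ht
  have hsplit : exp (κ * T) = exp (-(κ * (t - T))) * exp (κ * t) := by
    rw [← exp_add]; ring_nf
  rw [hsplit, ← mul_assoc] at hgt
  linarith [le_of_mul_le_mul_right hgt (exp_pos (κ * t))]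

theorem eventually_lt_of_hasDerivAt_add_mul_le (hκ : 0 < κ)
    (hf : ∀ᶠ t in atTop, HasDerivAt f (f' t) t) (hle : ∀ᶠ t in atTop, f' t + κ * f t ≤ C)
    {b : ℝ} (hb : C / κ < b) : ∀ᶠ t in atTop, f t < b := by
  obtain ⟨T, hT⟩ := eventually_atTop.1 (hf.and hle)
  have hdecay : Tendsto (fun t => exp (-(κ * (t - T)))) atTop (𝓝 0) :=
    tendsto_exp_neg_atTop_nhds_zero.comp
      ((tendsto_atTop_add_const_right _ (-T) tendsto_id).const_mul_atTop hκ)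
  have hbound : Tendsto (fun t => (f T - C / κ) * exp (-(κ * (t - T))) + C / κ) atTop
      (𝓝 (C / κ)) := by
    simpa using (hdecay.const_mul (f T - C / κ)).add_const (C / κ)
  filter_upwards [hbound.eventually_lt_const hb, eventually_ge_atTop T] with t hbt ht
  exact (le_of_hasDerivAt_add_mul_le hκ.ne' (fun s hs => (hT s hs).1)
    (fun s hs => (hT s hs).2) ht).trans_lt hbt

theorem tendsto_zero_of_hasDerivAt_add_mul_le_zero (hκ : 0 < κ)
    (hf : ∀ᶠ t in atTop, HasDerivAt f (f' t) t) (hle : ∀ᶠ t in atTop, f' t + κ * f t ≤ 0)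
    (h0 : ∀ᶠ t in atTop, 0 ≤ f t) : Tendsto f atTop (𝓝 0) :=
  tendsto_order.2 ⟨fun _ ha => h0.mono fun _ ht => ha.trans_le ht,
    fun _ hb => eventually_lt_of_hasDerivAt_add_mul_le hκ hf hle (by rwa [zero_div])⟩

end LinearDifferentialInequality

theorem exists_gt_of_mul_lt_of_mul_lt {a b c d x : ℝ} (hab : a * x < b) (hcd : c * x < d) :
    ∃ s, x < s ∧ a * s < b ∧ c * s < d := by
  have hnear : ∀ᶠ s in 𝓝 x, a * s < b ∧ c * s < d :=
    (((continuous_const_mul a).tendsto x).eventually_lt_const hab).and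
      (((continuous_const_mul c).tendsto x).eventually_lt_const hcd)
  have hright : ∀ᶠ s in 𝓝[>] x, a * s < b ∧ c * s < d := nhdsWithin_le_nhds hnear
  obtain ⟨s, hs, hx⟩ := (hright.and self_mem_nhdsWithin).exists
  exact ⟨s, hx, hs⟩

theorem stmt12_general (μ β c γ δ₁ δ₂ η Λℓ Λu t₀ : ℝ)
    (l : ℝ → ℝ) (S I P : ℝ → ℝ)
    (hμ : 0 < μ) (hβ : 0 < β) (hc : 0 < c) (hγ : 0 < γ)
    (hδ₁ : 0 < δ₁) (hδ₂ : 0 < δ₂) (hη : 0 < η)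
    (hlb : ∀ t, Λℓ ≤ l t ∧ l t ≤ Λu)
    (hpos : ∀ t, t₀ ≤ t → 0 ≤ S t ∧ 0 ≤ I t ∧ 0 ≤ P t)
    (hS : ∀ t, t₀ ≤ t → HasDerivAt S
      (l t - μ * S t - S t * P t - β * S t * I t) t)
    (hI : ∀ t, t₀ ≤ t → HasDerivAt I
      (β * S t * I t - η * I t * P t - c * I t) t)
    (hP : ∀ t, t₀ ≤ t → HasDerivAt P
      (γ * S t * P t + I t * P t - δ₁ * P t - δ₂ * (P t) ^ 2) t)
    (hthr1 : β * Λu < c * min μ δ₁)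
    (hthr2 : γ * Λu < δ₁ * min μ δ₁) :
    Tendsto (fun t => I t + P t) atTop (nhds 0) := by
  have hbelow {k d : ℝ} (hd : 0 < d) (h : k * Λu < d * min μ δ₁) : k * (Λu / μ) < d := by
    rw [mul_div_assoc', div_lt_iff₀ hμ]
    exact h.trans_le (mul_le_mul_of_nonneg_left (min_le_left _ _) hd.le)
  obtain ⟨s, hs, hβs, hγs⟩ := exists_gt_of_mul_lt_of_mul_lt (hbelow hc hthr1) (hbelow hδ₁ hthr2)
  have hpos' := eventually_atTop.2 ⟨t₀, hpos⟩
  have hS_lt : ∀ᶠ t in atTop, S t < s :=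
    eventually_lt_of_hasDerivAt_add_mul_le hμ (eventually_atTop.2 ⟨t₀, hS⟩)
      (by filter_upwards [hpos'] with t ⟨hS0, hI0, hP0⟩
          nlinarith [(hlb t).2, mul_nonneg hS0 hP0, mul_nonneg (mul_nonneg hβ.le hS0) hI0]) hs
  have hI_lim : Tendsto I atTop (𝓝 0) :=
    tendsto_zero_of_hasDerivAt_add_mul_le_zero (κ := c - β * s) (by linarith)
      (eventually_atTop.2 ⟨t₀, hI⟩)
      (by filter_upwards [hpos', hS_lt] with t ⟨hS0, hI0, hP0⟩ hSs
          nlinarith [mul_le_mul_of_nonneg_right (mul_le_mul_of_nonneg_left hSs.le hβ.le) hI0,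
            mul_nonneg (mul_nonneg hη.le hI0) hP0])
      (hpos'.mono fun _ h => h.2.1)
  have hκ : 0 < (δ₁ - γ * s) / 2 := by linarith
  have hP_lim : Tendsto P atTop (𝓝 0) :=
    tendsto_zero_of_hasDerivAt_add_mul_le_zero hκ (eventually_atTop.2 ⟨t₀, hP⟩)
      (by filter_upwards [hpos', hS_lt, hI_lim.eventually (eventually_le_nhds hκ)]
          with t ⟨hS0, hI0, hP0⟩ hSs hIκ
          nlinarith [mul_le_mul_of_nonneg_right (mul_le_mul_of_nonneg_left hSs.le hγ.le) hP0,
            mul_le_mul_of_nonneg_right hIκ hP0, mul_nonneg hδ₂.le (sq_nonneg (P t))])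
      (hpos'.mono fun _ h => h.2.2)
  simpa using hI_lim.add hP_lim

theorem stmt12 (μ β c γ δ₁ δ₂ η Λℓ Λu t₀ : ℝ)
    (l : ℝ → ℝ) (S I P : ℝ → ℝ)
    (hμ : 0 < μ) (hβ : 0 < β) (hc : 0 < c) (hγ : 0 < γ)
    (hδ₁ : 0 < δ₁) (hδ₂ : 0 < δ₂) (hη : 0 < η)
    (hΛℓ : 0 < Λℓ) (hΛ : Λℓ ≤ Λu)
    (hl : Continuous l) (hlb : ∀ t, Λℓ ≤ l t ∧ l t ≤ Λu)
    (hpos : ∀ t, t₀ ≤ t → 0 ≤ S t ∧ 0 ≤ I t ∧ 0 ≤ P t)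
    (hS : ∀ t, t₀ ≤ t → HasDerivAt S
      (l t - μ * S t - S t * P t - β * S t * I t) t)
    (hI : ∀ t, t₀ ≤ t → HasDerivAt I
      (β * S t * I t - η * I t * P t - c * I t) t)
    (hP : ∀ t, t₀ ≤ t → HasDerivAt P
      (γ * S t * P t + I t * P t - δ₁ * P t - δ₂ * (P t) ^ 2) t)
    (hthr1 : β * Λu < c * min μ δ₁)
    (hthr2 : γ * Λu < δ₁ * min μ δ₁) :
    Tendsto (fun t => I t + P t) atTop (nhds 0) :=
  stmt12_general μ β c γ δ₁ δ₂ η Λℓ Λu t₀ l S I P hμ hβ hc hγ hδ₁ hδ₂ hη hlb hpos hS hI hP hthr1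
    hthr2
end

section
/- For the SI system S' = λ(t) - μS - βSI, I' = βSI - cI with nonnegative solutions and λ(t) ≥ Λℓ > 0, λ(t) ≤ Λu: for every δ > 0, liminf_{t→∞} S(t) ≥ Λℓ / (μ + β(Λu/μ + δ)). In particular susceptible prey persist with asymptotic lower bound Λℓ / (μ + β Λu/μ). -/
open Real Filter Set Topology

/-!
The total population `N = S + I` satisfies `N' = λ - μ S - c I ≤ Λu - μ N` because `μ < c`, so
comparison with the linear equation `y' = Λu - μ y` puts `N`, hence `I`, eventually below
`Λu / μ + δ`. From then on `S' ≥ Λℓ - (μ + β (Λu / μ + δ)) S`, and comparison from below bounds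
`liminf S`. The bound for `δ = 0` is the limit `δ → 0⁺`.
-/

section LinearComparison

variable {y y' : ℝ → ℝ} {a b t₀ : ℝ}

theorem le_add_mul_exp_of_hasDerivAt_le (hb : b ≠ 0)
    (hy : ∀ t, t₀ ≤ t → HasDerivAt y (y' t) t) (hle : ∀ t, t₀ ≤ t → y' t ≤ a - b * y t)
    {t : ℝ} (ht : t₀ ≤ t) :
    y t ≤ a / b + (y t₀ - a / b) * exp (-(b * (t - t₀))) := by
  set g : ℝ → ℝ := fun t => (y t - a / b) * exp (b * t)
  have hg : ∀ t, t₀ ≤ t → HasDerivAt g ((y' t - (a - b * y t)) * exp (b * t)) t := by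
    intro t ht
    refine (((hy t ht).sub_const (a / b)).mul ((hasDerivAt_id' t).const_mul b).exp).congr_deriv ?_
    field_simp
    ring
  have hanti : AntitoneOn g (Ici t₀) := by
    refine antitoneOn_of_hasDerivWithinAt_nonpos (convex_Ici t₀)
      (fun t ht => (hg t ht).continuousAt.continuousWithinAt)
      (fun t ht => (hg t (interior_subset ht)).hasDerivWithinAt) (fun t ht => ?_)
    exact mul_nonpos_of_nonpos_of_nonneg (sub_nonpos.2 (hle t (interior_subset ht)))
      (exp_pos _).le
  have hgt : g t ≤ g t₀ := hanti self_mem_Ici ht ht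
  have hexp : exp (-(b * (t - t₀))) = exp (b * t₀) / exp (b * t) := by
    rw [← exp_sub]; ring_nf
  rw [hexp, ← sub_le_iff_le_add', mul_div_assoc', le_div_iff₀ (exp_pos _)]
  exact hgt

theorem tendsto_add_mul_exp_neg (hb : 0 < b) (c C : ℝ) :
    Tendsto (fun t => c + C * exp (-(b * (t - t₀)))) atTop (𝓝 c) := by
  have h : Tendsto (fun t => -(b * (t - t₀))) atTop atBot :=
    tendsto_neg_atTop_atBot.comp ((tendsto_atTop_add_const_right _ _ tendsto_id).const_mul_atTop hb)
  simpa using (tendsto_exp_atBot.comp h).const_mul C |>.const_add c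

theorem eventually_le_div_add_of_hasDerivAt_le (hb : 0 < b)
    (hy : ∀ᶠ t in atTop, HasDerivAt y (y' t) t) (hle : ∀ᶠ t in atTop, y' t ≤ a - b * y t)
    {ε : ℝ} (hε : 0 < ε) : ∀ᶠ t in atTop, y t ≤ a / b + ε := by
  obtain ⟨t₀, ht₀⟩ := eventually_atTop.1 (hy.and hle)
  have hlim := tendsto_add_mul_exp_neg (t₀ := t₀) hb (a / b) (y t₀ - a / b)
  filter_upwards [hlim.eventually_le_const (lt_add_of_pos_right _ hε), eventually_ge_atTop t₀]
    with t hlt ht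
  exact (le_add_mul_exp_of_hasDerivAt_le hb.ne' (fun s hs => (ht₀ s hs).1)
    (fun s hs => (ht₀ s hs).2) ht).trans hlt

theorem div_le_liminf_of_hasDerivAt_ge (hb : 0 < b)
    (hy : ∀ᶠ t in atTop, HasDerivAt y (y' t) t) (hge : ∀ᶠ t in atTop, a - b * y t ≤ y' t)
    (hbdd : IsBoundedUnder (· ≤ ·) atTop y) : a / b ≤ liminf y atTop := by
  refine le_of_forall_sub_le fun ε hε => le_liminf_of_le hbdd.isCoboundedUnder_ge ?_
  have hneg := eventually_le_div_add_of_hasDerivAt_le (y := -y) (a := -a) hb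
    (hy.mono fun t h => h.neg) (hge.mono fun t h => by simp only [Pi.neg_apply]; linarith) hε
  filter_upwards [hneg] with t ht
  rw [Pi.neg_apply, neg_div] at ht
  linarith

end LinearComparison

namespace SI

variable {μ β c Λℓ Λu : ℝ} {l S I : ℝ → ℝ}

theorem eventually_add_le (hμ : 0 < μ) (hμc : μ ≤ c) (hlu : ∀ t, l t ≤ Λu)
    (hI₀ : ∀ᶠ t in atTop, 0 ≤ I t)
    (hS : ∀ᶠ t in atTop, HasDerivAt S (l t - μ * S t - β * S t * I t) t)
    (hI : ∀ᶠ t in atTop, HasDerivAt I (β * S t * I t - c * I t) t) {δ : ℝ} (hδ : 0 < δ) :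
    ∀ᶠ t in atTop, S t + I t ≤ Λu / μ + δ := by
  -- the infection terms cancel in `(S + I)'`, and `μ ≤ c` gives `(S + I)' ≤ Λu - μ (S + I)`
  refine eventually_le_div_add_of_hasDerivAt_le (y := S + I) hμ
    ((hS.and hI).mono fun t h => h.1.add h.2) ?_ hδ
  filter_upwards [hI₀] with t ht
  simp only [Pi.add_apply]
  nlinarith [hlu t, mul_le_mul_of_nonneg_right hμc ht]

theorem le_liminf_susceptible (hμ : 0 < μ) (hβ : 0 < β) (hμc : μ ≤ c) (hΛu : 0 ≤ Λu)
    (hl : ∀ t, Λℓ ≤ l t ∧ l t ≤ Λu) (hpos : ∀ᶠ t in atTop, 0 ≤ S t ∧ 0 ≤ I t)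
    (hS : ∀ᶠ t in atTop, HasDerivAt S (l t - μ * S t - β * S t * I t) t)
    (hI : ∀ᶠ t in atTop, HasDerivAt I (β * S t * I t - c * I t) t) {δ : ℝ} (hδ : 0 < δ) :
    Λℓ / (μ + β * (Λu / μ + δ)) ≤ liminf S atTop := by
  have hN := eventually_add_le hμ hμc (fun t => (hl t).2) (hpos.mono fun t h => h.2) hS hI hδ
  have hSle : ∀ᶠ t in atTop, S t ≤ Λu / μ + δ := by
    filter_upwards [hN, hpos] with t hNt hpost
    linarith [hpost.2]
  -- once `I ≤ Λu / μ + δ`, the infection term is at most `β (Λu / μ + δ) S`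
  refine div_le_liminf_of_hasDerivAt_ge (by positivity) hS ?_ (isBoundedUnder_of_eventually_le hSle)
  filter_upwards [hN, hpos] with t hNt ⟨hSt, _⟩
  nlinarith [(hl t).1, mul_le_mul_of_nonneg_left (show I t ≤ Λu / μ + δ by linarith)
    (mul_nonneg hβ.le hSt)]

end SI

theorem stmt14_general (μ β c Λℓ Λu : ℝ) (l S I : ℝ → ℝ)
    (hμ : 0 < μ) (hβ : 0 < β) (hμc : μ < c)
    (hΛℓ : 0 < Λℓ) (hΛ : Λℓ ≤ Λu)
    (hlb : ∀ t, Λℓ ≤ l t ∧ l t ≤ Λu)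
    (hpos : ∀ t, 0 ≤ t → 0 ≤ S t ∧ 0 ≤ I t)
    (hS : ∀ t, 0 ≤ t → HasDerivAt S (l t - μ * S t - β * S t * I t) t)
    (hI : ∀ t, 0 ≤ t → HasDerivAt I (β * S t * I t - c * I t) t) :
    (∀ δ : ℝ, 0 < δ → Λℓ / (μ + β * (Λu / μ + δ)) ≤ liminf S atTop) ∧
    Λℓ / (μ + β * (Λu / μ)) ≤ liminf S atTop := by
  have hΛu : 0 ≤ Λu := (hΛℓ.trans_le hΛ).le
  have hbound (δ : ℝ) (hδ : 0 < δ) : Λℓ / (μ + β * (Λu / μ + δ)) ≤ liminf S atTop :=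
    SI.le_liminf_susceptible hμ hβ hμc.le hΛu hlb ((eventually_ge_atTop 0).mono hpos)
      ((eventually_ge_atTop 0).mono hS) ((eventually_ge_atTop 0).mono hI) hδ
  have hcont : ContinuousAt (fun δ : ℝ => Λℓ / (μ + β * (Λu / μ + δ))) 0 :=
    continuousAt_const.div (by fun_prop) (by positivity)
  have hlim : Tendsto (fun δ : ℝ => Λℓ / (μ + β * (Λu / μ + δ))) (𝓝[>] 0)
      (𝓝 (Λℓ / (μ + β * (Λu / μ)))) := by
    simpa using hcont.tendsto.mono_left nhdsWithin_le_nhds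
  exact ⟨hbound, le_of_tendsto hlim (eventually_nhdsWithin_of_forall hbound)⟩

theorem stmt14 (μ β c Λℓ Λu : ℝ) (l S I : ℝ → ℝ)
    (hμ : 0 < μ) (hβ : 0 < β) (hc : 0 < c) (hμc : μ < c)
    (hΛℓ : 0 < Λℓ) (hΛ : Λℓ ≤ Λu)
    (hl : Continuous l) (hlb : ∀ t, Λℓ ≤ l t ∧ l t ≤ Λu)
    (hpos : ∀ t, 0 ≤ t → 0 ≤ S t ∧ 0 ≤ I t)
    (hS : ∀ t, 0 ≤ t → HasDerivAt S (l t - μ * S t - β * S t * I t) t)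
    (hI : ∀ t, 0 ≤ t → HasDerivAt I (β * S t * I t - c * I t) t) :
    (∀ δ : ℝ, 0 < δ → Λℓ / (μ + β * (Λu / μ + δ)) ≤ liminf S atTop) ∧
    Λℓ / (μ + β * (Λu / μ)) ≤ liminf S atTop :=
  stmt14_general μ β c Λℓ Λu l S I hμ hβ hμc hΛℓ hΛ hlb hpos hS hI
end

section
/- For the SI system S' = λ(t) - μS - βSI, I' = βSI - cI with nonnegative solutions, λ(t) ∈ [Λℓ, Λu] ⊂ (0,∞): if β Λu/μ < c, then I(t) → 0 as t → ∞ for every nonnegative initial condition. Moreover I decays eventually exponentially: for δ > 0 small with βΛu/μ + βδ < c and t large, I(t) ≤ I(T) e^{(βΛu/μ + βδ - c)(t - T)}. -/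
open Real Filter

lemma my_gronwall15 {f f' : ℝ → ℝ} {δ K ε a b : ℝ}
    (hf' : ∀ x ∈ Set.Icc a b, HasDerivAt f (f' x) x)
    (ha : f a ≤ δ)
    (bound : ∀ x ∈ Set.Ico a b, f' x ≤ K * f x + ε) :
    ∀ x ∈ Set.Icc a b, f x ≤ gronwallBound δ K ε (x - a) :=
  le_gronwallBound_of_liminf_deriv_right_le
    (fun x hx => (hf' x hx).continuousAt.continuousWithinAt)
    (fun x hx r hr =>
      (hf' x (Set.Ico_subset_Icc_self hx)).hasDerivWithinAt.liminf_right_slope_le hr)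
    ha bound

theorem stmt15 (μ β c Λℓ Λu : ℝ) (l S I : ℝ → ℝ)
    (hμ : 0 < μ) (hβ : 0 < β) (hc : 0 < c) (hμc : μ < c)
    (hΛℓ : 0 < Λℓ) (hΛ : Λℓ ≤ Λu)
    (hl : Continuous l) (hlb : ∀ t, Λℓ ≤ l t ∧ l t ≤ Λu)
    (hpos : ∀ t, 0 ≤ t → 0 ≤ S t ∧ 0 ≤ I t)
    (hS : ∀ t, 0 ≤ t → HasDerivAt S (l t - μ * S t - β * S t * I t) t)
    (hI : ∀ t, 0 ≤ t → HasDerivAt I (β * S t * I t - c * I t) t)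
    (hthr : β * Λu / μ < c) :
    Tendsto I atTop (nhds 0) ∧
    (∀ δ : ℝ, 0 < δ → β * Λu / μ + β * δ < c →
      ∃ T : ℝ, 0 ≤ T ∧ ∀ t, T ≤ t →
        I t ≤ I T * Real.exp ((β * Λu / μ + β * δ - c) * (t - T))) := by
  -- Step 0: pointwise bound on S via Gronwall
  have hSb : ∀ b : ℝ, 0 ≤ b →
      S b ≤ S 0 * Real.exp (-μ * b) + Λu / μ * (1 - Real.exp (-μ * b)) := by
    intro b hb
    have h := my_gronwall15 (f := S)
      (f' := fun t => l t - μ * S t - β * S t * I t) (δ := S 0) (K := -μ) (ε := Λu)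
      (a := 0) (b := b)
      (fun x hx => hS x hx.1) le_rfl
      (fun x hx => by
        have hx0 : 0 ≤ x := hx.1
        have hSx := (hpos x hx0).1
        have hIx := (hpos x hx0).2
        have h1 : l x ≤ Λu := (hlb x).2
        show l x - μ * S x - β * S x * I x ≤ -μ * S x + Λu
        nlinarith [mul_nonneg (mul_nonneg hβ.le hSx) hIx])
      b (Set.mem_Icc.2 ⟨hb, le_rfl⟩)
    rw [sub_zero, gronwallBound_of_K_ne_0 (by linarith : -μ ≠ 0)] at h
    have he : Λu / -μ * (Real.exp (-μ * b) - 1) = Λu / μ * (1 - Real.exp (-μ * b)) := by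
      rw [div_neg]; ring
    simp only [he] at h
    exact h
  have hexp : Tendsto (fun b : ℝ => Real.exp (-μ * b)) atTop (nhds 0) := by
    apply Real.tendsto_exp_atBot.comp
    exact (tendsto_const_mul_atBot_of_neg (f := id) (by linarith : -μ < 0)).2 tendsto_id
  -- Step 1: eventually S t ≤ Λu/μ + δ
  have hSlim : ∀ δ : ℝ, 0 < δ → ∃ T : ℝ, 0 ≤ T ∧ ∀ t, T ≤ t → S t ≤ Λu / μ + δ := by
    intro δ hδ
    have hg : Tendsto (fun b : ℝ => S 0 * Real.exp (-μ * b)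
        + Λu / μ * (1 - Real.exp (-μ * b))) atTop (nhds (Λu / μ)) := by
      have := ((hexp.const_mul (S 0)).add
        (((tendsto_const_nhds (x := (1:ℝ))).sub hexp).const_mul (Λu / μ)))
      simpa using this
    have hev : ∀ᶠ b in atTop, S 0 * Real.exp (-μ * b)
        + Λu / μ * (1 - Real.exp (-μ * b)) < Λu / μ + δ :=
      hg.eventually (Filter.Tendsto.eventually_lt_const (by linarith) tendsto_id)
    rcases (hev.and (eventually_ge_atTop 0)).exists with ⟨T, hT1, hT0⟩
    -- we need it for all t ≥ T; use eventually form instead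
    rcases eventually_atTop.1 (hev.and (eventually_ge_atTop 0)) with ⟨T', hT'⟩
    refine ⟨max T' 0, le_max_right _ _, fun t ht => ?_⟩
    have h1 := hT' t (le_trans (le_max_left _ _) ht)
    exact le_trans (hSb t (le_trans (le_max_right _ _) ht)) h1.1.le
  -- Step 2: the exponential decay statement
  have main : ∀ δ : ℝ, 0 < δ → β * Λu / μ + β * δ < c →
      ∃ T : ℝ, 0 ≤ T ∧ ∀ t, T ≤ t →
        I t ≤ I T * Real.exp ((β * Λu / μ + β * δ - c) * (t - T)) := by
    intro δ hδ hδc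
    obtain ⟨T, hT0, hTS⟩ := hSlim δ hδ
    refine ⟨T, hT0, fun t ht => ?_⟩
    have h := my_gronwall15 (f := I)
      (f' := fun x => β * S x * I x - c * I x) (δ := I T)
      (K := β * Λu / μ + β * δ - c) (ε := 0) (a := T) (b := t)
      (fun x hx => hI x (le_trans hT0 hx.1)) le_rfl
      (fun x hx => by
        have hx0 : 0 ≤ x := le_trans hT0 hx.1
        have hIx := (hpos x hx0).2
        have hSx := hTS x hx.1
        have hb : β * S x * I x ≤ β * (Λu / μ + δ) * I x := by
          apply mul_le_mul_of_nonneg_right _ hIx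
          exact mul_le_mul_of_nonneg_left hSx hβ.le
        have : β * (Λu / μ + δ) = β * Λu / μ + β * δ := by ring
        nlinarith)
      t (Set.mem_Icc.2 ⟨ht, le_rfl⟩)
    rwa [gronwallBound_ε0] at h
  refine ⟨?_, main⟩
  -- Step 3: tendsto
  set δ := (c - β * Λu / μ) / (2 * β) with hδdef
  have hδpos : 0 < δ := div_pos (by linarith) (by linarith)
  have hbd : β * δ = (c - β * Λu / μ) / 2 := by
    rw [hδdef]; field_simp
  have hδc : β * Λu / μ + β * δ < c := by rw [hbd]; linarith
  obtain ⟨T, hT0, hbound⟩ := main δ hδpos hδc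
  set K := β * Λu / μ + β * δ - c with hKdef
  have hK : K < 0 := by rw [hKdef]; linarith
  have hgt : Tendsto (fun t : ℝ => I T * Real.exp (K * (t - T))) atTop (nhds 0) := by
    have h1 : Tendsto (fun t : ℝ => t - T) atTop atTop :=
      tendsto_atTop_add_const_right atTop (-T) tendsto_id
    have h2 : Tendsto (fun t : ℝ => K * (t - T)) atTop atBot :=
      (tendsto_const_mul_atBot_of_neg hK).2 h1
    have h3 : Tendsto (fun t : ℝ => Real.exp (K * (t - T))) atTop (nhds 0) :=
      Real.tendsto_exp_atBot.comp h2
    simpa using h3.const_mul (I T)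
  apply squeeze_zero' (g := fun t : ℝ => I T * Real.exp (K * (t - T)))
  · filter_upwards [eventually_ge_atTop (0:ℝ)] with t ht
    exact (hpos t ht).2
  · filter_upwards [eventually_ge_atTop T] with t ht
    exact hbound t ht
  · exact hgt
end
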